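/- Let A be a finite alphabet with k letters and m ≥ 2. Any m-uniform unavoidable set X of partial words over A (each element of X having length m, with no element being the empty word or consisting entirely of holes, and each element having its first and last positions defined) has size at least k + k(k-1)/2. -/
import Mathlib


/-- The three-letter alphabet. -/
inductive ABC | a | b | c
deriving DecidableEq
open ABC

/-- A partial word of length `m` over alphabet `A`. -/
abbrev PW (m : ℕ) (A : Type) := Fin m → Option A

/-- A two-sided infinite word `w` meets a partial word `u`. -/
def Meets {m : ℕ} {A : Type} (w : ℤ → A) (u : PW m A) : Prop :=
  ∃ i : ℤ, ∀ j : Fin m, ∀ x : A, u j = some x → w (i + (j : ℕ)) = x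

/-- A set of partial words is unavoidable over `A`. -/
def Unavoidable {m : ℕ} {A : Type} (X : Set (PW m A)) : Prop :=
  ∀ w : ℤ → A, ∃ u ∈ X, Meets w u

/-- A set of partial words is avoidable over `A`. -/
def Avoidable {m : ℕ} {A : Type} (X : Set (PW m A)) : Prop :=
  ∃ w : ℤ → A, ∀ u ∈ X, ¬ Meets w u

/-- The partial word `x ⋄^(m-2) y` of length `m`: first letter `x`, last letter `y`,
holes in between. -/
def oneHole {A : Type} (m : ℕ) (x y : A) : PW m A :=
  fun j => if (j : ℕ) = 0 then some x else if (j : ℕ) = m - 1 then some y else none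

/-- The partial word `x ⋄^(p-1) d ⋄^(m-p-2) y` of length `m`: first letter `x`,
letter `d` at position `p`, last letter `y`, holes elsewhere. -/
def twoDef {A : Type} (m : ℕ) (x d y : A) (p : ℕ) : PW m A :=
  fun j => if (j : ℕ) = 0 then some x else if (j : ℕ) = p then some d
    else if (j : ℕ) = m - 1 then some y else none

/-- The two-sided infinite word of period `P` repeating the block `f` (given on `[0, P)`). -/
def periodic {A : Type} (P : ℕ) (f : ℕ → A) : ℤ → A :=
  fun i => f ((i % (P : ℤ)).toNat)

/-- Any m-uniform unavoidable set of partial words over a k-letter alphabet,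
whose elements are nontrivial and have first and last positions defined,
has size at least k + k(k-1)/2. -/
theorem stmt_0 {A : Type} [Fintype A] (k m : ℕ) (hk : Fintype.card A = k)
    (hm : 2 ≤ m) (X : Set (PW m A)) (hX : Unavoidable X)
    (hnontriv : ∀ u ∈ X, ∃ j, u j ≠ none)
    (hends : ∀ u ∈ X, u ⟨0, by omega⟩ ≠ none ∧ u ⟨m - 1, by omega⟩ ≠ none) :
    k + k * (k - 1) / 2 ≤ X.ncard := by
  classical
  rcases Nat.eq_zero_or_pos k with hk0 | hkpos
  · simp [hk0]
  have hA : Nonempty A := by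
    rw [← Fintype.card_pos_iff, hk]; exact hkpos
  obtain ⟨d⟩ := hA
  set j0 : Fin m := ⟨0, by omega⟩ with hj0
  set j1 : Fin m := ⟨m - 1, by omega⟩ with hj1
  set E : PW m A → Sym2 A := fun u => s((u j0).getD d, (u j1).getD d) with hE
  -- key: E is surjective from X onto Sym2 A
  have key : ∀ z : Sym2 A, z ∈ E '' X := by
    intro z
    induction z using Sym2.ind with
    | _ p q =>
      by_cases hpq : p = q
      · -- diagonal case: constant word
        obtain ⟨u, huX, i, hu⟩ := hX (fun _ => p)
        obtain ⟨h0, h1⟩ := hends u huX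
        refine ⟨u, huX, ?_⟩
        obtain ⟨x0, hx0⟩ := Option.ne_none_iff_exists'.mp h0
        obtain ⟨x1, hx1⟩ := Option.ne_none_iff_exists'.mp h1
        have e0 := hu j0 x0 hx0
        have e1 := hu j1 x1 hx1
        simp only [hE, hx0, hx1, Option.getD_some]
        rw [← e0, ← e1, hpq]
      · -- off-diagonal case: word (p^(m-1) q^(m-1))^∞
        set P : ℕ := 2 * (m - 1) with hP
        set f : ℕ → A := fun r => if r < m - 1 then p else q with hf
        set w : ℤ → A := periodic P f with hw
        have hPpos : (0 : ℤ) < (P : ℤ) := by exact_mod_cast (by omega : 0 < P)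
        have hm1P : ((m - 1 : ℕ) : ℤ) % (P : ℤ) = ((m - 1 : ℕ) : ℤ) :=
          Int.emod_eq_of_lt (by positivity) (by exact_mod_cast (by omega : m - 1 < P))
        -- w n and w (n + (m-1)) take values p,q in some order
        have hstep : ∀ n : ℤ, (w n = p ∧ w (n + (m - 1 : ℕ)) = q) ∨
            (w n = q ∧ w (n + (m - 1 : ℕ)) = p) := by
          intro n
          have hmod : 0 ≤ n % (P : ℤ) ∧ n % (P : ℤ) < (P : ℤ) :=
            ⟨Int.emod_nonneg n (by omega), Int.emod_lt_of_pos n hPpos⟩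
          have hadd : (n + (m - 1 : ℕ)) % (P : ℤ) = (n % (P : ℤ) + (m - 1 : ℕ)) % (P : ℤ) := by
            rw [Int.add_emod, hm1P]
          by_cases hc : n % (P : ℤ) < ((m - 1 : ℕ) : ℤ)
          · left
            constructor
            · show f ((n % (P : ℤ)).toNat) = p
              simp only [hf]
              rw [if_pos (by omega)]
            · show f (((n + ((m - 1 : ℕ) : ℤ)) % (P : ℤ)).toNat) = q
              rw [hadd, Int.emod_eq_of_lt (by omega) (by push_cast; omega)]
              simp only [hf]
              rw [if_neg (by omega)]
          · right
            constructor
            · show f ((n % (P : ℤ)).toNat) = q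
              simp only [hf]
              rw [if_neg (by omega)]
            · show f (((n + ((m - 1 : ℕ) : ℤ)) % (P : ℤ)).toNat) = p
              have hrw : n % (P : ℤ) + ((m - 1 : ℕ) : ℤ) = (n % (P : ℤ) + (m - 1 : ℕ) - P) + P * 1 := by
                ring
              rw [hadd, hrw, Int.add_mul_emod_self_left,
                Int.emod_eq_of_lt (by push_cast; omega) (by push_cast; omega)]
              simp only [hf]
              rw [if_pos (by push_cast; omega)]
        -- apply unavoidability to w
        obtain ⟨u, huX, i, hu⟩ := hX w
        obtain ⟨h0, h1⟩ := hends u huX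
        refine ⟨u, huX, ?_⟩
        obtain ⟨x0, hx0⟩ := Option.ne_none_iff_exists'.mp h0
        obtain ⟨x1, hx1⟩ := Option.ne_none_iff_exists'.mp h1
        have e0 := hu j0 x0 hx0
        have e1 := hu j1 x1 hx1
        have hval0 : (j0 : ℕ) = 0 := rfl
        have hval1 : (j1 : ℕ) = m - 1 := rfl
        rw [hval0] at e0
        rw [hval1] at e1
        simp only [Nat.cast_zero, add_zero] at e0
        simp only [hE, hx0, hx1, Option.getD_some]
        rcases hstep i with ⟨hp, hq⟩ | ⟨hq, hp⟩
        · rw [← e0, ← e1, hp, hq]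
        · rw [← e0, ← e1, hq, hp, Sym2.eq_swap]
  -- counting
  have hXfin : X.Finite := Set.toFinite X
  have hsub : (Set.univ : Set (Sym2 A)) ⊆ E '' X := fun z _ => key z
  have h1 : (Set.univ : Set (Sym2 A)).ncard ≤ (E '' X).ncard :=
    Set.ncard_le_ncard hsub (Set.toFinite _)
  have h2 : (E '' X).ncard ≤ X.ncard := Set.ncard_image_le hXfin
  have h3 : (Set.univ : Set (Sym2 A)).ncard = Fintype.card (Sym2 A) := by
    rw [Set.ncard_univ, Nat.card_eq_fintype_card]
  have h4 : Fintype.card (Sym2 A) = Nat.choose (k + 1) 2 := by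
    rw [Sym2.card, hk]
  have h5 : k + k * (k - 1) / 2 = Nat.choose (k + 1) 2 := by
    rw [Nat.choose_succ_succ, Nat.choose_one_right, Nat.choose_two_right]
  omega
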